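/- arXiv:math/0603082 — 2 statements merged into one kernel-verified Lean document; each statement's English description precedes it below -/
import Mathlib

section
/- For any balanced lattice design X ∈ U(n, q^s) with n ≥ 2 and any convex function ψ : ℝ → ℝ, ∑_{1 ≤ i < k ≤ n} ψ(β(x_i, x_k)) ≥ m(1 − f)ψ(θ) + m f ψ(θ + 1), where m = n(n−1)/2, β̄ = s(n−q)/(q(n−1)), θ = ⌊β̄⌋ and f = β̄ − θ. -/
open Finset

/-- The coincidence number β(x, w) = #{j : x_j = w_j} of two lattice points. -/
def coincidence {s q : ℕ} (x w : Fin s → Fin q) : ℕ :=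
  (univ.filter fun j => x j = w j).card

/-- A design `X ∈ U(n, q^s)` is balanced: `q ∣ n` and every level occurs exactly
`n / q` times in each column. -/
def IsBalanced {n s q : ℕ} (X : Fin n → Fin s → Fin q) : Prop :=
  q ∣ n ∧ ∀ (j : Fin s) (ℓ : Fin q),
    (univ.filter fun i => X i j = ℓ).card = n / q

/-- The index set of pairs 1 ≤ i < k ≤ n. -/
def pairs (n : ℕ) : Finset (Fin n × Fin n) := univ.filter fun p => p.1 < p.2

/-! Counting coincidences column by column, a balanced design satisfies
`∑_{i<k} β(x_i, x_k) = m β̄`. Every β is an integer, so none lies strictly between `θ` and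
`θ + 1`, and there convexity puts `ψ(β)` above the secant line of `ψ` through `θ` and `θ + 1`.
That secant is affine in β, so summing it over the `m` pairs gives exactly the claimed bound. -/

theorem ConvexOn.secant_le_of_notMem_Ioo {𝕜 : Type*} [Field 𝕜] [LinearOrder 𝕜]
    [IsStrictOrderedRing 𝕜] {s : Set 𝕜} {f : 𝕜 → 𝕜} (hf : ConvexOn 𝕜 s f) {a b y : 𝕜}
    (ha : a ∈ s) (hb : b ∈ s) (hy : y ∈ s) (hab : a < b) (hy' : y ∉ Set.Ioo a b) :
    f a + (f b - f a) / (b - a) * (y - a) ≤ f y := by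
  rcases lt_trichotomy y a with hya | rfl | hay
  · have h := hf.secant_mono ha hy hb hya.ne hab.ne' (hya.trans hab).le
    rw [div_le_iff_of_neg (sub_neg.2 hya)] at h
    linarith
  · simp
  · have hby : b ≤ y := by
      by_contra! h
      exact hy' ⟨hay, h⟩
    have h := hf.secant_mono ha hb hy hab.ne' hay.ne' hby
    rw [le_div_iff₀ (sub_pos.2 hay)] at h
    linarith

theorem ConvexOn.add_sub_mul_le_of_int {f : ℝ → ℝ} (hf : ConvexOn ℝ Set.univ f) (a y : ℤ) :
    f a + (f (a + 1) - f a) * (y - a) ≤ f y := by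
  have h := hf.secant_le_of_notMem_Ioo (Set.mem_univ (a : ℝ)) (Set.mem_univ ((a : ℝ) + 1))
    (Set.mem_univ (y : ℝ)) (lt_add_one _) ?_
  · simpa using h
  rintro ⟨h1, h2⟩
  norm_cast at h1 h2
  omega

theorem ConvexOn.card_mul_add_le_sum_of_int {f : ℝ → ℝ} (hf : ConvexOn ℝ Set.univ f)
    {ι : Type*} (t : Finset ι) (b : ι → ℤ) (a : ℤ) :
    #t * f a + (f (a + 1) - f a) * (∑ i ∈ t, (b i : ℝ) - #t * a) ≤ ∑ i ∈ t, f (b i) := by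
  calc #t * f a + (f (a + 1) - f a) * (∑ i ∈ t, (b i : ℝ) - #t * a)
      = ∑ i ∈ t, (f a + (f (a + 1) - f a) * (b i - a)) := by
        simp only [sum_add_distrib, ← mul_sum, sum_sub_distrib, sum_const, nsmul_eq_mul]
    _ ≤ ∑ i ∈ t, f (b i) := sum_le_sum fun i _ => hf.add_sub_mul_le_of_int a (b i)

theorem sum_univ_eq_two_nsmul_sum_pairs_add {M : Type*} [AddCommMonoid M] {n : ℕ}
    (g : Fin n × Fin n → M) (hg : ∀ i k, g (i, k) = g (k, i)) :
    ∑ p, g p = 2 • ∑ p ∈ pairs n, g p + ∑ i, g (i, i) := by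
  have hswap : ∑ p ∈ univ.filter (fun p : Fin n × Fin n => p.2 < p.1), g p
      = ∑ p ∈ pairs n, g p :=
    sum_equiv (Equiv.prodComm _ _) (by simp [pairs]) fun p _ => hg p.1 p.2
  have hdiag : ∑ p ∈ univ.filter (fun p : Fin n × Fin n => p.1 = p.2), g p
      = ∑ i, g (i, i) := by
    rw [sum_filter, Fintype.sum_prod_type]
    simp
  rw [two_nsmul, ← hdiag]
  nth_rw 2 [← hswap]
  simp only [pairs, sum_filter, ← sum_add_distrib]
  refine sum_congr rfl fun p _ => ?_
  rcases lt_trichotomy p.1 p.2 with h | h | h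
  · simp [h, h.ne, h.not_gt]
  · simp [h]
  · simp [h, h.ne', h.not_gt]

theorem cast_card_pairs (n : ℕ) : (#(pairs n) : ℝ) = n * (n - 1) / 2 := by
  have h : n * n = 2 * #(pairs n) + n := by
    simpa using sum_univ_eq_two_nsmul_sum_pairs_add (n := n) (fun _ => (1 : ℕ)) fun _ _ => rfl
  rw [← Nat.cast_inj (R := ℝ)] at h
  push_cast at h
  linarith

theorem coincidence_comm {s q : ℕ} (x w : Fin s → Fin q) :
    coincidence x w = coincidence w x := by
  simp only [coincidence, eq_comm]

theorem coincidence_self {s q : ℕ} (x : Fin s → Fin q) : coincidence x x = s := by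
  simp [coincidence]

theorem coincidence_eq_sum {s q : ℕ} (x w : Fin s → Fin q) :
    coincidence x w = ∑ j, if x j = w j then 1 else 0 := card_filter _ _

namespace IsBalanced

variable {n s q : ℕ} {X : Fin n → Fin s → Fin q}

theorem card_filter_col_eq (hX : IsBalanced X) (j : Fin s) :
    #(univ.filter fun p : Fin n × Fin n => X p.1 j = X p.2 j) = n * (n / q) := by
  have hrow : ∀ i, ∑ k, (if X i j = X k j then 1 else 0) = n / q := fun i => by
    rw [← card_filter]
    simp_rw [eq_comm (a := X i j)]
    exact hX.2 j (X i j)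
  rw [card_filter, Fintype.sum_prod_type]
  simp [hrow]

theorem sum_coincidence (hX : IsBalanced X) :
    ∑ p : Fin n × Fin n, coincidence (X p.1) (X p.2) = s * (n * (n / q)) := by
  simp_rw [coincidence_eq_sum]
  rw [sum_comm]
  simp_rw [← card_filter, hX.card_filter_col_eq]
  simp

theorem two_mul_sum_pairs_coincidence_add (hX : IsBalanced X) :
    2 * ∑ p ∈ pairs n, coincidence (X p.1) (X p.2) + n * s = s * (n * (n / q)) := by
  rw [← hX.sum_coincidence, sum_univ_eq_two_nsmul_sum_pairs_add _ fun _ _ => coincidence_comm _ _]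
  simp [coincidence_self]

theorem sum_pairs_coincidence (hX : IsBalanced X) (hn : 2 ≤ n) :
    ∑ p ∈ pairs n, (coincidence (X p.1) (X p.2) : ℝ)
      = n * (n - 1) / 2 * (s * (n - q) / (q * (n - 1))) := by
  have hq : (q : ℝ) ≠ 0 := by
    exact_mod_cast (Nat.pos_of_dvd_of_pos hX.1 (by omega)).ne'
  have hn1 : (n : ℝ) - 1 ≠ 0 := sub_ne_zero.2 (by exact_mod_cast (by omega : n ≠ 1))
  have h := hX.two_mul_sum_pairs_coincidence_add
  rw [← Nat.cast_inj (R := ℝ)] at h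
  push_cast [Nat.cast_div hX.1 hq] at h
  field_simp at h ⊢
  linear_combination h

end IsBalanced

theorem schur_criterion_lower_bound_general (n s q : ℕ) (hn : 2 ≤ n)
    (X : Fin n → Fin s → Fin q) (hX : IsBalanced X)
    (ψ : ℝ → ℝ) (hψ : ConvexOn ℝ Set.univ ψ)
    (m : ℝ) (hm : m = (n : ℝ) * ((n : ℝ) - 1) / 2)
    (βbar : ℝ) (hβbar : βbar = (s : ℝ) * ((n : ℝ) - q) / ((q : ℝ) * ((n : ℝ) - 1)))
    (θ : ℕ)
    (f : ℝ) (hf : f = βbar - θ) :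
    m * (1 - f) * ψ θ + m * f * ψ (θ + 1) ≤
      ∑ p ∈ pairs n, ψ (coincidence (X p.1) (X p.2)) := by
  have hsecant := hψ.card_mul_add_le_sum_of_int (pairs n) (fun p => coincidence (X p.1) (X p.2)) θ
  push_cast at hsecant
  rw [hX.sum_pairs_coincidence hn, cast_card_pairs, ← hm, ← hβbar] at hsecant
  calc m * (1 - f) * ψ θ + m * f * ψ (θ + 1)
      = m * ψ θ + (ψ (θ + 1) - ψ θ) * (m * βbar - m * θ) := by rw [hf]; ring
    _ ≤ _ := hsecant

/-- Theorem 1 (second part): for any balanced design `X ∈ U(n, q^s)` and convex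
kernel ψ, the Schur-ψ criterion ∑_{i<k} ψ(β(x_i, x_k)) is bounded below by
m(1 − f)ψ(θ) + m f ψ(θ + 1), where m = n(n−1)/2, β̄ = s(n−q)/(q(n−1)),
θ = ⌊β̄⌋ and f = β̄ − θ. -/
theorem schur_criterion_lower_bound (n s q : ℕ) (hq : 2 ≤ q) (hn : 2 ≤ n)
    (X : Fin n → Fin s → Fin q) (hX : IsBalanced X)
    (ψ : ℝ → ℝ) (hψ : ConvexOn ℝ Set.univ ψ)
    (m : ℝ) (hm : m = (n : ℝ) * ((n : ℝ) - 1) / 2)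
    (βbar : ℝ) (hβbar : βbar = (s : ℝ) * ((n : ℝ) - q) / ((q : ℝ) * ((n : ℝ) - 1)))
    (θ : ℕ) (hθ : θ = ⌊βbar⌋₊)
    (f : ℝ) (hf : f = βbar - θ) :
    m * (1 - f) * ψ θ + m * f * ψ (θ + 1) ≤
      ∑ p ∈ pairs n, ψ (coincidence (X p.1) (X p.2)) :=
  schur_criterion_lower_bound_general n s q hn X hX ψ hψ m hm βbar hβbar θ f hf
end

section
/- Let X ∈ U(n, 2^s) be a balanced two-level lattice design with n ≥ 2, s ≥ 2, such that 2(n−1) divides s(n−2). Then E(s²)(X) ≥ n²(s − n + 1)/((s−1)(n−1)). -/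
open Finset

/-- The Booth–Cox criterion E(s²)(X) = (2/(s(s−1))) ∑_{j<l} (x_{(j)}ᵀ x_{(l)})²,
where the columns are recoded from {0,1} to {−1,1} via ℓ ↦ 2ℓ − 1. -/
noncomputable def Es2 {n s : ℕ} (X : Fin n → Fin s → Fin 2) : ℝ :=
  2 / ((s : ℝ) * ((s : ℝ) - 1)) *
    ∑ p ∈ pairs s,
      (∑ i, (2 * ((X i p.1 : ℕ) : ℝ) - 1) * (2 * ((X i p.2 : ℕ) : ℝ) - 1)) ^ 2

/-- Recoded column entries. -/
noncomputable def colv {n s : ℕ} (X : Fin n → Fin s → Fin 2) (i : Fin n) (j : Fin s) : ℝ :=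
  2 * ((X i j : ℕ) : ℝ) - 1

lemma colv_sq {n s : ℕ} (X : Fin n → Fin s → Fin 2) (i : Fin n) (j : Fin s) :
    colv X i j * colv X i j = 1 := by
  have h := (X i j).isLt
  have h' : (X i j : ℕ) = 0 ∨ (X i j : ℕ) = 1 := by omega
  rcases h' with h0 | h0 <;> simp [colv, h0] <;> ring

lemma colv_sum {n s : ℕ} (X : Fin n → Fin s → Fin 2) (hX : IsBalanced X) (j : Fin s) :
    ∑ i, colv X i j = 0 := by
  obtain ⟨h2, hbal⟩ := hX
  have key : ∀ i : Fin n, ((X i j : ℕ) : ℝ) = if X i j = 1 then 1 else 0 := by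
    intro i
    have h' : (X i j : ℕ) = 0 ∨ (X i j : ℕ) = 1 := by
      have := (X i j).isLt; omega
    rcases h' with h0 | h0 <;> simp [Fin.ext_iff, h0]
  have hsum : ∑ i, colv X i j
      = 2 * ∑ i : Fin n, (if X i j = 1 then (1:ℝ) else 0) - n := by
    simp only [colv, key]
    rw [Finset.sum_sub_distrib, ← Finset.mul_sum]
    simp [Finset.card_univ]
  rw [hsum, Finset.sum_boole]
  have hc : (Finset.univ.filter fun i => X i j = 1).card = n / 2 := hbal j 1
  have h22 : 2 * (n / 2) = n := Nat.mul_div_cancel' h2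
  have hcast : ((2 * (n / 2) : ℕ) : ℝ) = (n : ℝ) := by rw [h22]
  push_cast at hcast
  rw [show (Finset.filter (fun i => X i j = 1) Finset.univ).card = n / 2 from hc]
  linarith [hcast]

/-- Splitting a double sum into diagonal and off-diagonal parts. -/
lemma sum_split {m : ℕ} (f : Fin m → Fin m → ℝ) :
    ∑ i, ∑ k, f i k
      = (∑ i, f i i) + ∑ p ∈ Finset.univ.filter (fun p : Fin m × Fin m => p.1 ≠ p.2),
          f p.1 p.2 := by
  rw [← Finset.sum_product']
  have huniv : (Finset.univ ×ˢ Finset.univ : Finset (Fin m × Fin m)) = Finset.univ := by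
    simp
  rw [huniv,
    ← Finset.sum_filter_add_sum_filter_not (Finset.univ : Finset (Fin m × Fin m))
      (fun p => p.1 = p.2)]
  congr 1
  rw [Finset.sum_filter, ← huniv, Finset.sum_product]
  simp

lemma quad_swap {α β : Type*} [Fintype α] [Fintype β] (F : α → α → β → β → ℝ) :
    ∑ j, ∑ l, ∑ i, ∑ k, F j l i k = ∑ i, ∑ k, ∑ j, ∑ l, F j l i k :=
  calc ∑ j, ∑ l, ∑ i, ∑ k, F j l i k
      = ∑ j, ∑ i, ∑ l, ∑ k, F j l i k :=
        Finset.sum_congr rfl fun j _ => Finset.sum_comm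
    _ = ∑ i, ∑ j, ∑ l, ∑ k, F j l i k := Finset.sum_comm
    _ = ∑ i, ∑ j, ∑ k, ∑ l, F j l i k :=
        Finset.sum_congr rfl fun i _ => Finset.sum_congr rfl fun j _ =>
          Finset.sum_comm
    _ = ∑ i, ∑ k, ∑ j, ∑ l, F j l i k :=
        Finset.sum_congr rfl fun i _ => Finset.sum_comm

set_option maxHeartbeats 1600000 in
/-- For a balanced two-level design whose PC-mean is an integer (2(n−1) ∣ s(n−2)),
E(s²)(X) ≥ n²(s − n + 1) / ((s−1)(n−1)). -/
theorem Es2_lower_bound (n s : ℕ) (hn : 2 ≤ n) (hs : 2 ≤ s)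
    (X : Fin n → Fin s → Fin 2) (hX : IsBalanced X)
    (hdvd : 2 * (n - 1) ∣ s * (n - 2)) :
    Es2 X ≥ (n : ℝ) ^ 2 * ((s : ℝ) - n + 1) / (((s : ℝ) - 1) * ((n : ℝ) - 1)) := by
  have hb2 : (2:ℝ) ≤ (n:ℝ) := by exact_mod_cast hn
  have ha2 : (2:ℝ) ≤ (s:ℝ) := by exact_mod_cast hs
  set x : Fin n → Fin s → ℝ := colv X with hxdef
  set c : Fin s → Fin s → ℝ := fun j l => ∑ i, x i j * x i l with hcdef
  set d : Fin n → Fin n → ℝ := fun i k => ∑ j, x i j * x k j with hddef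
  set T : ℝ := ∑ p ∈ pairs s, (c p.1 p.2) ^ 2 with hTdef
  have hE : Es2 X = 2 / ((s:ℝ) * ((s:ℝ) - 1)) * T := rfl
  have csymm : ∀ j l, c j l = c l j := fun j l =>
    Finset.sum_congr rfl fun i _ => mul_comm _ _
  have cdiag : ∀ j, c j j = (n:ℝ) := by
    intro j
    simp only [hcdef]
    rw [Finset.sum_congr rfl fun i _ => colv_sq X i j]
    simp
  have ddiag : ∀ i, d i i = (s:ℝ) := by
    intro i
    simp only [hddef]
    rw [Finset.sum_congr rfl fun j _ => colv_sq X i j]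
    simp
  -- the swap identity
  have hswap : ∑ j, ∑ l, (c j l) ^ 2 = ∑ i, ∑ k, (d i k) ^ 2 := by
    have L : ∀ j l, (c j l) ^ 2
        = ∑ i, ∑ k, (x i j * x i l) * (x k j * x k l) := by
      intro j l
      rw [sq, hcdef]
      exact Finset.sum_mul_sum _ _ _ _
    have R : ∀ i k, (d i k) ^ 2
        = ∑ j, ∑ l, (x i j * x i l) * (x k j * x k l) := by
      intro i k
      rw [sq, hddef, Finset.sum_mul_sum]
      exact Finset.sum_congr rfl fun j _ => Finset.sum_congr rfl fun l _ => by ring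
    calc ∑ j, ∑ l, (c j l) ^ 2
        = ∑ j, ∑ l, ∑ i, ∑ k, (x i j * x i l) * (x k j * x k l) :=
          Finset.sum_congr rfl fun j _ => Finset.sum_congr rfl fun l _ => L j l
      _ = ∑ i, ∑ k, ∑ j, ∑ l, (x i j * x i l) * (x k j * x k l) := quad_swap _
      _ = ∑ i, ∑ k, (d i k) ^ 2 :=
          Finset.sum_congr rfl fun i _ => Finset.sum_congr rfl fun k _ => (R i k).symm
  -- total sum of d is zero by balance
  have hdsum : ∑ i, ∑ k, d i k = 0 := by
    have h1 : ∑ i, ∑ k, d i k = ∑ j, (∑ i, x i j) * (∑ k, x k j) := by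
      simp only [hddef]
      calc ∑ i, ∑ k, ∑ j, x i j * x k j
          = ∑ i, ∑ j, ∑ k, x i j * x k j :=
            Finset.sum_congr rfl fun i _ => Finset.sum_comm
        _ = ∑ j, ∑ i, ∑ k, x i j * x k j := Finset.sum_comm
        _ = ∑ j, (∑ i, x i j) * (∑ k, x k j) :=
            Finset.sum_congr rfl fun j _ => (Finset.sum_mul_sum _ _ _ _).symm
    rw [h1]
    have hz : ∀ j : Fin s, ∑ i, x i j = 0 := fun j => colv_sum X hX j
    simp [hz]
  -- off-diagonal sets
  set offn : Finset (Fin n × Fin n) :=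
    Finset.univ.filter (fun p : Fin n × Fin n => p.1 ≠ p.2) with hoffn
  set offs : Finset (Fin s × Fin s) :=
    Finset.univ.filter (fun p : Fin s × Fin s => p.1 ≠ p.2) with hoffs
  set Q : ℝ := ∑ p ∈ offn, (d p.1 p.2) ^ 2 with hQdef
  -- splits
  have splitc : ∑ j, ∑ l, (c j l) ^ 2
      = (s:ℝ) * (n:ℝ)^2 + ∑ p ∈ offs, (c p.1 p.2) ^ 2 := by
    rw [sum_split (fun j l => (c j l) ^ 2)]
    congr 1
    rw [Finset.sum_congr rfl fun j _ => by rw [cdiag j]]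
    simp [mul_comm]
  have splitd2 : ∑ i, ∑ k, (d i k) ^ 2 = (n:ℝ) * (s:ℝ)^2 + Q := by
    rw [sum_split (fun i k => (d i k) ^ 2)]
    congr 1
    rw [Finset.sum_congr rfl fun i _ => by rw [ddiag i]]
    simp [mul_comm]
  have splitd : (0:ℝ) = (n:ℝ) * (s:ℝ) + ∑ p ∈ offn, d p.1 p.2 := by
    rw [← hdsum, sum_split d]
    congr 1
    rw [Finset.sum_congr rfl fun i _ => ddiag i]
    simp [mul_comm]
  have hDoff : ∑ p ∈ offn, d p.1 p.2 = -((n:ℝ) * (s:ℝ)) := by linarith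
  -- card of offn
  have hcard : (offn.card : ℝ) = (n:ℝ) * (n:ℝ) - (n:ℝ) := by
    have he : offn = (Finset.univ : Finset (Fin n)).offDiag := by
      ext p; simp [hoffn, Finset.mem_offDiag]
    rw [he, Finset.offDiag_card]
    have hle : n ≤ n * n := Nat.le_mul_of_pos_left n (by omega)
    simp only [Finset.card_univ, Fintype.card_fin]
    push_cast [Nat.cast_sub hle]
    ring
  -- Cauchy–Schwarz
  have hcs : ((n:ℝ) * (s:ℝ))^2 ≤ ((n:ℝ) * (n:ℝ) - (n:ℝ)) * Q := by
    have h := sq_sum_le_card_mul_sum_sq (s := offn) (f := fun p => d p.1 p.2)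
    rw [hDoff] at h
    calc ((n:ℝ) * (s:ℝ))^2 = (-((n:ℝ)*(s:ℝ)))^2 := by ring
      _ ≤ (offn.card : ℝ) * Q := h
      _ = ((n:ℝ) * (n:ℝ) - (n:ℝ)) * Q := by rw [hcard]
  -- off-diagonal c sum equals 2T
  have hdouble : ∑ p ∈ offs, (c p.1 p.2) ^ 2 = 2 * T := by
    rw [← Finset.sum_filter_add_sum_filter_not offs (fun p => p.1 < p.2)]
    have h1 : offs.filter (fun p => p.1 < p.2) = pairs s := by
      ext p
      simp only [hoffs, pairs, Finset.mem_filter, Finset.mem_univ, true_and]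
      exact ⟨fun h => h.2, fun h => ⟨ne_of_lt h, h⟩⟩
    have h2 : ∑ p ∈ offs.filter (fun p => ¬ p.1 < p.2), (c p.1 p.2) ^ 2
        = ∑ p ∈ pairs s, (c p.1 p.2) ^ 2 := by
      refine Finset.sum_nbij' (i := Prod.swap) (j := Prod.swap) ?_ ?_ ?_ ?_ ?_
      · intro p hp
        simp only [hoffs, Finset.mem_filter, Finset.mem_univ, true_and] at hp
        obtain ⟨hne, hnlt⟩ := hp
        simp only [pairs, Finset.mem_filter, Finset.mem_univ, true_and, Prod.fst_swap,
          Prod.snd_swap]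
        exact lt_of_le_of_ne (not_lt.mp hnlt) (Ne.symm hne)
      · intro p hp
        simp only [pairs, Finset.mem_filter, Finset.mem_univ, true_and] at hp
        simp only [hoffs, Finset.mem_filter, Finset.mem_univ, true_and, Prod.fst_swap,
          Prod.snd_swap]
        exact ⟨ne_of_gt hp, not_lt.mpr (le_of_lt hp)⟩
      · intro p _; exact Prod.swap_swap p
      · intro p _; exact Prod.swap_swap p
      · intro p _
        simp only [Prod.fst_swap, Prod.snd_swap]
        rw [csymm]
    rw [h1, h2, hTdef]
    ring
  -- combine: a b² + 2T = b a² + Q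
  have keyeq : (s:ℝ) * (n:ℝ)^2 + 2 * T = (n:ℝ) * (s:ℝ)^2 + Q := by
    rw [← hdouble, ← splitc, hswap, splitd2]
  -- main inequality
  have hT : (s:ℝ) * (n:ℝ)^2 * ((s:ℝ) - (n:ℝ) + 1) ≤ 2 * ((n:ℝ) - 1) * T := by
    nlinarith [hcs, keyeq, hb2, ha2]
  have hp1 : (0:ℝ) < ((s:ℝ) - 1) * ((n:ℝ) - 1) := by nlinarith
  have hp2 : (0:ℝ) < (s:ℝ) * ((s:ℝ) - 1) := by nlinarith
  rw [ge_iff_le, hE, show (2:ℝ) / ((s:ℝ) * ((s:ℝ) - 1)) * T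
    = (2 * T) / ((s:ℝ) * ((s:ℝ) - 1)) by ring, div_le_div_iff₀ hp1 hp2]
  nlinarith [mul_nonneg (show (0:ℝ) ≤ (s:ℝ) - 1 by linarith) (sub_nonneg.mpr hT)]
end
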